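/- Let a > 0 be a real constant. Then for all sufficiently large n, every binary (n, M, d) code with minimum distance d ≥ n/2 − a√n satisfies M ≤ 2^{0.189 n}. -/

import Mathlib

open Finset Filter Real Topology

/-! A code of minimum distance `d > 2r` packs disjoint Hamming balls of radius `r`, so
`#C * n.choose r ≤ 2 ^ n`. The largest term of `n ^ n = (r + (n - r)) ^ n` is the one of index
`r`, whence `n.choose r ≥ exp (n * H (r / n)) / (n + 1)`, with `H` the binary entropy in nats.
Taking `r ≈ n/4 - a√n`, so that `2r < n/2 - a√n ≤ d` and `r / n → 1/4`, gives
`log #C ≤ n * (log 2 - H (1/4)) + o(n)`, and `log 2 - H (1/4) = (3/4) log 3 - log 2 < 0.189 log 2`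
because `3 ^ 94 < 2 ^ 149`. -/

namespace Nat

lemma choose_succ_mul_pow_mul_pow_mul {n j : ℕ} (m : ℕ) (hj : j < n) :
    n.choose (j + 1) * (m ^ (j + 1) * (n - m) ^ (n - (j + 1))) * ((j + 1) * (n - m)) =
      n.choose j * (m ^ j * (n - m) ^ (n - j)) * ((n - j) * m) := by
  obtain ⟨q, hq⟩ : ∃ q, n - j = q + 1 := ⟨n - (j + 1), by omega⟩
  have hq' : n - (j + 1) = q := by omega
  have hchoose := choose_succ_right_eq n j
  rw [hq] at hchoose ⊢
  rw [hq']
  calc _ = n.choose (j + 1) * (j + 1) * (m ^ (j + 1) * (n - m) ^ (q + 1)) := by ring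
    _ = _ := by rw [hchoose]; ring

theorem choose_mul_pow_mul_pow_le {n m : ℕ} (hm : m ≤ n) (k : ℕ) :
    n.choose k * (m ^ k * (n - m) ^ (n - k)) ≤ n.choose m * (m ^ m * (n - m) ^ (n - m)) := by
  set T : ℕ → ℕ := fun k => n.choose k * (m ^ k * (n - m) ^ (n - k))
  have ratio : ∀ j < n, T (j + 1) * ((j + 1) * (n - m)) = T j * ((n - j) * m) :=
    fun j hj => choose_succ_mul_pow_mul_pow_mul m hj
  have increasing : ∀ j, j + 1 ≤ m → T j ≤ T (j + 1) := by
    intro j hj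
    have hpos : 0 < (n - j) * m := Nat.mul_pos (by omega) (by omega)
    refine Nat.le_of_mul_le_mul_right ?_ hpos
    rw [← ratio j (by omega), mul_comm (n - j)]
    exact Nat.mul_le_mul_left _ (Nat.mul_le_mul hj (by omega))
  have decreasing : ∀ j, m ≤ j → T (j + 1) ≤ T j := by
    intro j hj
    rcases lt_or_ge j n with hjn | hnj
    · have hpos : 0 < (j + 1) * (n - m) := Nat.mul_pos (by omega) (by omega)
      refine Nat.le_of_mul_le_mul_right ?_ hpos
      rw [ratio j hjn, mul_comm (j + 1)]
      exact Nat.mul_le_mul_left _ (Nat.mul_le_mul (by omega) (by omega))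
    · simp [T, choose_eq_zero_of_lt (lt_succ_of_le hnj)]
  change T k ≤ T m
  rcases le_total k m with hk | hk
  · refine monotoneOn_of_le_succ Set.ordConnected_Iic (fun j _ _ hj => ?_) hk le_rfl hk
    rw [Order.succ_eq_add_one] at hj ⊢
    exact increasing j hj
  · exact antitoneOn_nat_Ici_of_succ_le decreasing (le_refl m) hk hk

theorem pow_le_succ_mul_choose_mul_pow_mul_pow {n m : ℕ} (hm : m ≤ n) :
    n ^ n ≤ (n + 1) * (n.choose m * (m ^ m * (n - m) ^ (n - m))) := by
  calc n ^ n = (m + (n - m)) ^ n := by rw [Nat.add_sub_cancel' hm]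
    _ = ∑ k ∈ range (n + 1), n.choose k * (m ^ k * (n - m) ^ (n - k)) := by
      rw [add_pow]; exact sum_congr rfl fun k _ => by rw [Nat.cast_id]; ring
    _ ≤ ∑ _k ∈ range (n + 1), n.choose m * (m ^ m * (n - m) ^ (n - m)) :=
      sum_le_sum fun k _ => choose_mul_pow_mul_pow_le hm k
    _ = _ := by rw [sum_const, card_range, smul_eq_mul]

end Nat

lemma Real.mul_negMulLog_div (x : ℝ) {y : ℝ} (hy : y ≠ 0) :
    y * negMulLog (x / y) = negMulLog x + x * log y := by
  rw [div_eq_mul_inv, negMulLog_mul]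
  simp only [negMulLog, log_inv]
  field_simp

theorem Real.mul_binEntropy_le_log_succ_add_log_choose {n m : ℕ} (hm : m ≤ n) :
    n * binEntropy (m / n) ≤ log (n + 1) + log (n.choose m) := by
  obtain ⟨q, rfl⟩ := Nat.exists_eq_add_of_le hm
  rcases Nat.eq_zero_or_pos (m + q) with h0 | hpos
  · obtain ⟨rfl, rfl⟩ := Nat.add_eq_zero_iff.1 h0
    simp
  have hn : ((m + q : ℕ) : ℝ) ≠ 0 := by positivity
  have hentropy : ((m + q : ℕ) : ℝ) * binEntropy (m / (m + q : ℕ)) =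
      (m + q : ℕ) * log (m + q : ℕ) - (m * log m + q * log q) := by
    have hsub : 1 - (m : ℝ) / (m + q : ℕ) = q / (m + q : ℕ) := by
      field_simp; push_cast; ring
    rw [binEntropy_eq_negMulLog_add_negMulLog_one_sub, hsub, mul_add,
      mul_negMulLog_div _ hn, mul_negMulLog_div _ hn]
    simp only [negMulLog]
    push_cast
    ring
  have hcounting := Nat.pow_le_succ_mul_choose_mul_pow_mul_pow hm
  rw [Nat.add_sub_cancel_left] at hcounting
  have hlog := Real.log_le_log (by exact_mod_cast Nat.pow_self_pos) (Nat.cast_le.2 hcounting)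
  have hm0 : ((m ^ m : ℕ) : ℝ) ≠ 0 := by exact_mod_cast Nat.pow_self_pos.ne'
  have hq0 : ((q ^ q : ℕ) : ℝ) ≠ 0 := by exact_mod_cast Nat.pow_self_pos.ne'
  have hc0 : ((m + q).choose m : ℝ) ≠ 0 := by exact_mod_cast (Nat.choose_pos hm).ne'
  push_cast at hlog hm0 hq0
  rw [log_mul (by positivity) (mul_ne_zero hc0 (mul_ne_zero hm0 hq0)), log_mul hc0
    (mul_ne_zero hm0 hq0), log_mul hm0 hq0, log_pow, log_pow, log_pow] at hlog
  push_cast at hentropy hlog ⊢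
  linarith

section HammingBound

variable {ι β : Type*} [Fintype ι] [DecidableEq ι] [Fintype β] [DecidableEq β]

def hammingBall (c : ι → β) (r : ℕ) : Finset (ι → β) := {x | hammingDist x c ≤ r}

lemma mem_hammingBall {c x : ι → β} {r : ℕ} : x ∈ hammingBall c r ↔ hammingDist x c ≤ r := by
  simp [hammingBall]

lemma pairwiseDisjoint_hammingBall {C : Finset (ι → β)} {d r : ℕ}
    (hC : ∀ x ∈ C, ∀ y ∈ C, x ≠ y → d ≤ hammingDist x y) (hr : 2 * r < d) :
    (C : Set (ι → β)).PairwiseDisjoint (hammingBall · r) := by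
  intro x hx y hy hxy
  refine disjoint_left.2 fun z hzx hzy => ?_
  have htriangle := hammingDist_triangle_right x y z
  have := hC x hx y hy hxy
  rw [mem_hammingBall, hammingDist_comm] at hzx hzy
  omega

lemma choose_le_card_hammingBall [AddGroup β] [Nontrivial β] (c : ι → β) (r : ℕ) :
    (Fintype.card ι).choose r ≤ #(hammingBall c r) := by
  obtain ⟨b, hb⟩ := exists_ne (0 : β)
  let flipOn (s : Finset ι) : ι → β := c + fun i => if i ∈ s then b else 0
  have hdist (s : Finset ι) : hammingDist (flipOn s) c = #s := by
    rw [hammingDist_comm, hammingDist_eq_hammingNorm, neg_add_cancel_left, hammingNorm]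
    congr 1
    ext i
    simp [hb]
  rw [← card_univ, ← card_powersetCard]
  refine card_le_card_of_injOn flipOn (fun s hs => ?_) fun s _ t _ hst => ?_
  · rw [mem_coe, mem_powersetCard] at hs
    rw [mem_coe, mem_hammingBall, hdist, hs.2]
  · ext i
    have hi := congrFun hst i
    by_cases hs : i ∈ s <;> by_cases ht : i ∈ t <;> simp [flipOn, hs, ht, hb] at hi ⊢

theorem card_mul_choose_le_card_pow [AddGroup β] [Nontrivial β] {C : Finset (ι → β)} {d r : ℕ}
    (hC : ∀ x ∈ C, ∀ y ∈ C, x ≠ y → d ≤ hammingDist x y) (hr : 2 * r < d) :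
    #C * (Fintype.card ι).choose r ≤ Fintype.card β ^ Fintype.card ι :=
  calc #C * (Fintype.card ι).choose r ≤ ∑ c ∈ C, #(hammingBall c r) :=
        card_nsmul_le_sum _ _ _ fun c _ => choose_le_card_hammingBall c r
    _ = #(C.biUnion (hammingBall · r)) := (card_biUnion (pairwiseDisjoint_hammingBall hC hr)).symm
    _ ≤ Fintype.card (ι → β) := card_le_univ _
    _ = Fintype.card β ^ Fintype.card ι := Fintype.card_fun

theorem log_card_le_of_two_mul_lt [AddGroup β] [Nontrivial β] {C : Finset (ι → β)} {d r : ℕ}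
    (hC : ∀ x ∈ C, ∀ y ∈ C, x ≠ y → d ≤ hammingDist x y) (hr : 2 * r < d)
    (hrn : r ≤ Fintype.card ι) :
    log #C ≤ Fintype.card ι * (log (Fintype.card β) - binEntropy (r / Fintype.card ι)) +
      log (Fintype.card ι + 1) := by
  set n := Fintype.card ι
  have hentropy := mul_binEntropy_le_log_succ_add_log_choose hrn
  rcases C.eq_empty_or_nonempty with rfl | hne
  · have hq : log 2 ≤ log (Fintype.card β) :=
      log_le_log two_pos (by exact_mod_cast Fintype.one_lt_card (α := β))
    have := binEntropy_le_log_two (p := r / n)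
    have := log_nonneg (by linarith [n.cast_nonneg (α := ℝ)] : (1 : ℝ) ≤ n + 1)
    simp only [card_empty, Nat.cast_zero, log_zero]
    nlinarith [n.cast_nonneg (α := ℝ)]
  have hbound : (#C * n.choose r : ℝ) ≤ Fintype.card β ^ n := by
    exact_mod_cast card_mul_choose_le_card_pow hC hr
  have hlog := log_le_log (by have := Nat.choose_pos hrn; positivity) hbound
  rw [log_mul (by simpa using hne.ne_empty) (by exact_mod_cast (Nat.choose_pos hrn).ne'),
    log_pow] at hlog
  linarith

end HammingBound

noncomputable def packingRadius (a : ℝ) (n : ℕ) : ℕ := ⌊(n : ℝ) / 4 - a * √n⌋₊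

section PackingRadius

variable {a : ℝ} {n : ℕ}

lemma two_mul_packingRadius_lt (ha : 0 < a) (hr : 0 < packingRadius a n) {d : ℕ}
    (hd : n / 2 - a * √n ≤ d) : 2 * packingRadius a n < d := by
  have hfloor : 1 ≤ (n : ℝ) / 4 - a * √n := Nat.floor_pos.1 hr
  have hsqrt : 0 < √(n : ℝ) := sqrt_pos.2 (by nlinarith [sqrt_nonneg (n : ℝ)])
  have hle : (packingRadius a n : ℝ) ≤ n / 4 - a * √n := Nat.floor_le (by linarith)
  have : (2 * packingRadius a n : ℝ) < d := by nlinarith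
  exact_mod_cast this

lemma packingRadius_le (ha : 0 ≤ a) : (packingRadius a n : ℝ) ≤ n / 4 := by
  have hle : (n : ℝ) / 4 - a * √n ≤ n / 4 := sub_le_self _ (mul_nonneg ha (sqrt_nonneg _))
  exact (Nat.cast_le.2 (Nat.floor_le_floor hle)).trans (Nat.floor_le (by positivity))

lemma tendsto_packingRadius_div (ha : 0 ≤ a) :
    Tendsto (fun n : ℕ => (packingRadius a n : ℝ) / n) atTop (𝓝 4⁻¹) := by
  have hinv : Tendsto (fun n : ℕ => (n : ℝ)⁻¹) atTop (𝓝 0) :=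
    tendsto_inv_atTop_zero.comp tendsto_natCast_atTop_atTop
  have hsqrt_inv : Tendsto (fun n : ℕ => (√(n : ℝ))⁻¹) atTop (𝓝 0) :=
    tendsto_inv_atTop_zero.comp (tendsto_sqrt_atTop.comp tendsto_natCast_atTop_atTop)
  have hlower : Tendsto (fun n : ℕ => 4⁻¹ - a * (√(n : ℝ))⁻¹ - (n : ℝ)⁻¹) atTop (𝓝 4⁻¹) := by
    simpa using (tendsto_const_nhds.sub (hsqrt_inv.const_mul a)).sub hinv
  refine tendsto_of_tendsto_of_tendsto_of_le_of_le' hlower tendsto_const_nhds ?_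
    (Eventually.of_forall fun n => ?_)
  · filter_upwards [eventually_gt_atTop 0] with n hn
    have hn' : (0 : ℝ) < n := by exact_mod_cast hn
    have hfloor := (Nat.sub_one_lt_floor ((n : ℝ) / 4 - a * √n)).le
    calc 4⁻¹ - a * (√(n : ℝ))⁻¹ - (n : ℝ)⁻¹ = ((n : ℝ) / 4 - a * √n - 1) / n := by
          rw [← sqrt_div_self]; field_simp
      _ ≤ (packingRadius a n : ℝ) / n := by gcongr; exact hfloor
  · exact div_le_of_le_mul₀ n.cast_nonneg (by norm_num) (by linarith [packingRadius_le (n := n) ha])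

lemma eventually_pos_packingRadius (ha : 0 ≤ a) : ∀ᶠ n in atTop, 0 < packingRadius a n := by
  filter_upwards [(tendsto_packingRadius_div ha).eventually_const_lt (by norm_num : (0 : ℝ) < 4⁻¹)]
    with n hn
  exact_mod_cast pos_of_mul_pos_left hn (by positivity : (0 : ℝ) ≤ (n : ℝ)⁻¹)

lemma packingRadius_le_self (ha : 0 ≤ a) : packingRadius a n ≤ n := by
  have : (packingRadius a n : ℝ) ≤ n := by
    linarith [packingRadius_le (n := n) ha, n.cast_nonneg (α := ℝ)]
  exact_mod_cast this

end PackingRadius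

lemma tendsto_log_add_one_div_natCast :
    Tendsto (fun n : ℕ => log (n + 1) / n) atTop (𝓝 0) := by
  have := (tendsto_pow_log_div_mul_add_atTop 1 (-1) 1 one_ne_zero).comp
    (tendsto_atTop_add_const_right _ 1 tendsto_natCast_atTop_atTop)
  exact this.congr fun n => by simp

lemma log_two_sub_binEntropy_four_inv_lt : log 2 - binEntropy 4⁻¹ < 0.189 * log 2 := by
  have hpow : (3 : ℝ) ^ 94 < 2 ^ 149 := by norm_num
  have hlog := log_lt_log (by positivity) hpow
  rw [log_pow, log_pow] at hlog
  have h4 : log 4 = 2 * log 2 := by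
    rw [show (4 : ℝ) = 2 ^ 2 by norm_num, log_pow]; norm_num
  simp only [binEntropy, log_inv, show (1 : ℝ) - 4⁻¹ = 3 / 4 by norm_num,
    log_div (by norm_num : (3 : ℝ) ≠ 0) (by norm_num : (4 : ℝ) ≠ 0), h4]
  have hlog2 := log_pos one_lt_two
  push_cast at hlog
  norm_num
  linarith

lemma eventually_log_add_one_div_add_log_two_sub_binEntropy_lt {a : ℝ} (ha : 0 ≤ a) :
    ∀ᶠ n : ℕ in atTop,
      log (n + 1) / n + (log 2 - binEntropy (packingRadius a n / n)) < 0.189 * log 2 := by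
  have hlim : Tendsto (fun n : ℕ => log (n + 1) / n + (log 2 - binEntropy (packingRadius a n / n)))
      atTop (𝓝 (0 + (log 2 - binEntropy 4⁻¹))) :=
    tendsto_log_add_one_div_natCast.add
      (tendsto_const_nhds.sub
        ((binEntropy_continuous.tendsto _).comp (tendsto_packingRadius_div ha)))
  rw [zero_add] at hlim
  exact hlim.eventually_lt_const log_two_sub_binEntropy_four_inv_lt

/-- Hamming-bound consequence: for any `a > 0` and sufficiently large `n`, every binary
`(n, M, d)` code with `d ≥ n/2 - a√n` satisfies `M ≤ 2^(0.189 n)`. -/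
theorem hamming_bound_sqrt_regime (a : ℝ) (ha : 0 < a) :
    ∃ N : ℕ, ∀ n : ℕ, N ≤ n →
      ∀ d : ℕ, ∀ C : Finset (Fin n → ZMod 2),
        (∀ x ∈ C, ∀ y ∈ C, x ≠ y → d ≤ hammingDist x y) →
        ((n : ℝ) / 2 - a * Real.sqrt n ≤ d) →
        (C.card : ℝ) ≤ (2 : ℝ) ^ ((0.189 : ℝ) * n) := by
  obtain ⟨N, hN⟩ := eventually_atTop.1 <| (eventually_pos_packingRadius ha.le).and
    (eventually_log_add_one_div_add_log_two_sub_binEntropy_lt ha.le)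
  refine ⟨N, fun n hn d C hC hd => ?_⟩
  obtain ⟨hr, hexponent⟩ := hN n hn
  have hn_pos : (0 : ℝ) < n := by exact_mod_cast hr.trans_le (packingRadius_le_self ha.le)
  have hlog := log_card_le_of_two_mul_lt hC (two_mul_packingRadius_lt ha hr hd)
    (by simpa using packingRadius_le_self ha.le)
  simp only [Fintype.card_fin, ZMod.card, Nat.cast_ofNat] at hlog
  have hscaled := mul_lt_mul_of_pos_left hexponent hn_pos
  rw [mul_add, mul_div_cancel₀ _ hn_pos.ne'] at hscaled
  calc (#C : ℝ) ≤ exp (log #C) := le_exp_log _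
    _ ≤ exp (log 2 * (0.189 * n)) := by gcongr; linarith
    _ = 2 ^ ((0.189 : ℝ) * n) := (rpow_def_of_pos two_pos _).symm
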